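/- arXiv:2412.20178 — 2 statements merged into one kernel-verified Lean document; each statement's English description precedes it below -/
import Mathlib

section
/- For every n ≥ 1, the set of formulas validated at the root of F_{n+1} is strictly contained in the set of formulas validated at the root of F_n; that is, every formula valid at the root of F_{n+1} is valid at the root of F_n, and there is a formula valid at the root of F_n but not at the root of F_{n+1}. -/
/-- Formulas of intuitionistic propositional logic, built from propositional
variables `p_0, p_1, …` (indexed by `ℕ`) and `⊥` using `∧`, `∨`, `→`. -/
inductive Form : Type
  | var : ℕ → Form
  | bot : Form
  | and : Form → Form → Form
  | or : Form → Form → Form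
  | imp : Form → Form → Form
  deriving DecidableEq

namespace Form

/-- `¬α` abbreviates `α → ⊥`. -/
def neg (φ : Form) : Form := φ.imp .bot

/-- `⊤` abbreviates `⊥ → ⊥`. -/
def top : Form := Form.bot.imp .bot

/-- The set of propositional variables occurring in a formula. -/
def vars : Form → Set ℕ
  | var p => {p}
  | bot => ∅
  | and φ ψ => φ.vars ∪ ψ.vars
  | or φ ψ => φ.vars ∪ ψ.vars
  | imp φ ψ => φ.vars ∪ ψ.vars

/-- Uniform substitution, extended homomorphically to all formulas. -/
def subst (σ : ℕ → Form) : Form → Form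
  | var p => σ p
  | bot => bot
  | and φ ψ => (φ.subst σ).and (ψ.subst σ)
  | or φ ψ => (φ.subst σ).or (ψ.subst σ)
  | imp φ ψ => (φ.subst σ).imp (ψ.subst σ)

end Form

/-- A valuation `V` on a poset is intuitionistic when every `V p` is upward closed. -/
def IsVal {P : Type} [PartialOrder P] (V : ℕ → Set P) : Prop :=
  ∀ p, ∀ x y : P, x ≤ y → x ∈ V p → y ∈ V p

/-- The standard Kripke forcing relation for intuitionistic propositional logic. -/
def forces {P : Type} [PartialOrder P] (V : ℕ → Set P) : P → Form → Prop
  | w, .var p => w ∈ V p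
  | _, .bot => False
  | w, .and φ ψ => forces V w φ ∧ forces V w ψ
  | w, .or φ ψ => forces V w φ ∨ forces V w ψ
  | w, .imp φ ψ => ∀ v, w ≤ v → forces V v φ → forces V v ψ

/-- A point `w` of a poset validates `φ` if `φ` is forced at `w` under every
intuitionistic valuation. -/
def valid {P : Type} [PartialOrder P] (w : P) (φ : Form) : Prop :=
  ∀ V : ℕ → Set P, IsVal V → forces V w φ

/-- Semantic consequence at a point: `Γ ⊨_{P,w} φ`. -/
def Conseq {P : Type} [PartialOrder P] (Γ : Set Form) (w : P) (φ : Form) : Prop :=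
  ∀ V : ℕ → Set P, IsVal V → (∀ γ ∈ Γ, forces V w γ) → forces V w φ

/-- The n-Medvedev frame: nonempty subsets of `{0,…,n−1}`. -/
def Med (n : ℕ) : Type := {X : Finset (Fin n) // X.Nonempty}

/-- The order on the n-Medvedev frame is reverse inclusion `⊇`. -/
instance (n : ℕ) : PartialOrder (Med n) where
  le X Y := Y.1 ⊆ X.1
  le_refl X := Finset.Subset.refl _
  le_trans X Y Z h1 h2 := Finset.Subset.trans h2 h1
  le_antisymm X Y h1 h2 := Subtype.ext (Finset.Subset.antisymm h2 h1)

instance (n : ℕ) : Fintype (Med n) :=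
  inferInstanceAs (Fintype {X : Finset (Fin n) // X.Nonempty})

/-- The root (least element) of the n-Medvedev frame: the full set `{0,…,n−1}`. -/
def root (n : ℕ) (hn : 1 ≤ n) : Med n := ⟨Finset.univ, ⟨⟨0, hn⟩, Finset.mem_univ _⟩⟩

/-- `endSet w` is the set of end points (maximal elements) above `w`. -/
def endSet {P : Type} [PartialOrder P] (w : P) : Set P := {e | IsMax e ∧ w ≤ e}

/-- Finite disjunction `⋁_{i} F i` (the empty disjunction is `⊥`). -/
def bigDisj (n : ℕ) (F : Fin n → Form) : Form :=
  (List.finRange n).foldr (fun i acc => (F i).or acc) .bot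

/-- `λ_i = p_i ∧ ⋀_{j ≠ i} ¬ p_j`, for a choice `p : Fin n → ℕ` of variables. -/
def lam (n : ℕ) (p : Fin n → ℕ) (i : Fin n) : Form :=
  (Form.var (p i)).and
    (((List.finRange n).filter (fun j => j ≠ i)).foldr
      (fun j acc => ((Form.var (p j)).neg).and acc) Form.top)

/-- A Hilbert-style axiomatization of intuitionistic propositional logic. -/
inductive IPC : Form → Prop
  | ax1 (φ ψ : Form) : IPC (φ.imp (ψ.imp φ))
  | ax2 (φ ψ χ : Form) : IPC ((φ.imp (ψ.imp χ)).imp ((φ.imp ψ).imp (φ.imp χ)))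
  | andI (φ ψ : Form) : IPC (φ.imp (ψ.imp (φ.and ψ)))
  | andE1 (φ ψ : Form) : IPC ((φ.and ψ).imp φ)
  | andE2 (φ ψ : Form) : IPC ((φ.and ψ).imp ψ)
  | orI1 (φ ψ : Form) : IPC (φ.imp (φ.or ψ))
  | orI2 (φ ψ : Form) : IPC (ψ.imp (φ.or ψ))
  | orE (φ ψ χ : Form) : IPC ((φ.imp χ).imp ((ψ.imp χ).imp ((φ.or ψ).imp χ)))
  | botE (φ : Form) : IPC (Form.bot.imp φ)
  | mp {φ ψ : Form} : IPC (φ.imp ψ) → IPC φ → IPC ψ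

/-- The Kreisel–Putnam formula `(¬p → q ∨ r) → ((¬p → q) ∨ (¬p → r))`. -/
def kpForm : Form :=
  ((Form.var 0).neg.imp ((Form.var 1).or (Form.var 2))).imp
    (((Form.var 0).neg.imp (Form.var 1)).or ((Form.var 0).neg.imp (Form.var 2)))

/-- The bounded-depth formulas: `bd_1 = p_1 ∨ (p_1 → ⊥)`,
`bd_{k+1} = p_{k+1} ∨ (p_{k+1} → bd_k)`. -/
def bd : ℕ → Form
  | 0 => .bot
  | k + 1 => (Form.var (k + 1)).or ((Form.var (k + 1)).imp (bd k))

/-- `ML_n`: the smallest set of formulas containing all theorems of intuitionistic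
propositional logic and all substitution instances of `kp` and `bd_n`, closed under
modus ponens, uniform substitution, and the Gabbay-style rule `Ed_n`. -/
inductive MLn (n : ℕ) : Form → Prop
  | ipc {φ : Form} : IPC φ → MLn n φ
  | kp : MLn n kpForm
  | bdn : MLn n (bd n)
  | mp {φ ψ : Form} : MLn n (φ.imp ψ) → MLn n φ → MLn n ψ
  | subst {φ : Form} (σ : ℕ → Form) : MLn n φ → MLn n (φ.subst σ)
  | ed {α β : Form} (p : Fin n → ℕ) : Function.Injective p →
      (∀ i, p i ∉ α.vars ∧ p i ∉ β.vars) →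
      MLn n (α.imp (β.or (bigDisj n fun i => (lam n p i).neg))) →
      MLn n (α.imp β)

/-- `Γ ⊢_n φ`: there are finitely many `γ_1, …, γ_k ∈ Γ` with
`(γ_1 ∧ … ∧ γ_k) → φ ∈ ML_n`. -/
def Proves (n : ℕ) (Γ : Set Form) (φ : Form) : Prop :=
  ∃ l : List Form, (∀ γ ∈ l, γ ∈ Γ) ∧ MLn n ((l.foldr Form.and Form.top).imp φ)

/-- Disjunction `⋁_{i ∈ I} F i` over a finite set of indices. -/
def disjOver {n : ℕ} (I : Finset (Fin n)) (F : Fin n → Form) : Form :=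
  ((List.finRange n).filter (fun i => i ∈ I)).foldr (fun i acc => (F i).or acc) .bot

/-- `α_I = ¬¬ ⋁_{i ∈ I} α_i`. -/
def alphaI {n : ℕ} (I : Finset (Fin n)) (α : Fin n → Form) : Form :=
  ((disjOver I α).neg).neg

open Classical in
/-- `α_S = ⋁_{I ∈ S} α_I` for a set `S` of points of the n-Medvedev frame
(with `α_∅ = ⊥`). -/
noncomputable def alphaS {n : ℕ} (S : Set (Med n)) (α : Fin n → Form) : Form :=
  ((Finset.univ : Finset (Med n)).filter (fun I => I ∈ S)).toList.foldr
    (fun I acc => (alphaI I.1 α).or acc) .bot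

/-! ### Auxiliary machinery for stmt12 -/

section Stmt12Aux

/-- Collapse map `Fin (n+1) → Fin n` (identity below `n`, sending `n` to `n-1`). -/
def hmap (n : ℕ) (hn : 1 ≤ n) : Fin (n + 1) → Fin n :=
  fun i => ⟨min i.val (n - 1), by omega⟩

/-- Induced p-morphism `Med (n+1) → Med n`. -/
def fmap (n : ℕ) (hn : 1 ≤ n) : Med (n + 1) → Med n :=
  fun X => ⟨X.1.image (hmap n hn), X.2.image _⟩

lemma fmap_mono (n : ℕ) (hn : 1 ≤ n) {X Y : Med (n + 1)} (h : X ≤ Y) :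
    fmap n hn X ≤ fmap n hn Y := by
  exact Finset.image_subset_image h

lemma fmap_back (n : ℕ) (hn : 1 ≤ n) (X : Med (n + 1)) (v : Med n)
    (hv : fmap n hn X ≤ v) : ∃ Y : Med (n + 1), X ≤ Y ∧ fmap n hn Y = v := by
  have hsub : v.1 ⊆ (fmap n hn X).1 := hv
  obtain ⟨z, hz⟩ := v.2
  have hz' : z ∈ (X.1.image (hmap n hn)) := hsub hz
  obtain ⟨x, hx, hxz⟩ := Finset.mem_image.mp hz'
  refine ⟨⟨X.1.filter (fun i => hmap n hn i ∈ v.1), ⟨x, ?_⟩⟩, ?_, ?_⟩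
  · simp only [Finset.mem_filter]; exact ⟨hx, by rw [hxz]; exact hz⟩
  · exact Finset.filter_subset _ _
  · apply Subtype.ext
    ext j
    simp only [fmap, Finset.mem_image, Finset.mem_filter]
    constructor
    · rintro ⟨y, ⟨_, hy2⟩, rfl⟩; exact hy2
    · intro hj
      obtain ⟨y, hy, hyj⟩ := Finset.mem_image.mp (hsub hj)
      exact ⟨y, ⟨hy, by rw [hyj]; exact hj⟩, hyj⟩

lemma forces_pullback (n : ℕ) (hn : 1 ≤ n) (V : ℕ → Set (Med n)) :
    ∀ (φ : Form) (X : Med (n + 1)),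
      forces (fun p => {Y | fmap n hn Y ∈ V p}) X φ ↔ forces V (fmap n hn X) φ := by
  intro φ
  induction φ with
  | var p => intro X; exact Iff.rfl
  | bot => intro X; exact Iff.rfl
  | and φ ψ ih1 ih2 => intro X; simp only [forces, ih1, ih2]
  | or φ ψ ih1 ih2 => intro X; simp only [forces, ih1, ih2]
  | imp φ ψ ih1 ih2 =>
    intro X
    constructor
    · intro h v hv hvφ
      obtain ⟨Y, hXY, hfY⟩ := fmap_back n hn X v hv
      have := h Y hXY ((ih1 Y).mpr (by rw [hfY]; exact hvφ))
      have := (ih2 Y).mp this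
      rwa [hfY] at this
    · intro h Y hXY hYφ
      exact (ih2 Y).mpr (h (fmap n hn Y) (fmap_mono n hn hXY) ((ih1 Y).mp hYφ))

lemma fmap_root (n : ℕ) (hn : 1 ≤ n) :
    fmap n hn (root (n + 1) (Nat.le_add_left 1 n)) = root n hn := by
  apply Subtype.ext
  apply Finset.eq_univ_iff_forall.mpr
  intro j
  apply Finset.mem_image.mpr
  refine ⟨⟨j.val, by omega⟩, Finset.mem_univ _, ?_⟩
  apply Fin.ext
  simp only [hmap]
  omega

/-- `bd k` is forced at any point of `Med n` of cardinality at most `k`. -/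
lemma forces_bd_of_card {n : ℕ} (V : ℕ → Set (Med n)) :
    ∀ (k : ℕ) (X : Med n), X.1.card ≤ k → forces V X (bd k) := by
  intro k
  induction k with
  | zero =>
    intro X hX
    exact absurd (Finset.card_pos.mpr X.2) (by omega)
  | succ k ih =>
    intro X hX
    by_cases hx : X ∈ V (k + 1)
    · exact Or.inl hx
    · refine Or.inr ?_
      intro v hv hvv
      by_cases hc : v.1.card ≤ k
      · exact ih v hc
      · exfalso
        have hsub : v.1 ⊆ X.1 := hv
        have : X.1 = v.1 :=
          Finset.eq_of_subset_of_card_le hsub (by omega) |>.symm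
        exact hx (by rwa [show X = v from Subtype.ext this])

/-- The chain witness sets in `Med (n+1)`. -/
def chainSet (n m : ℕ) : Finset (Fin (n + 1)) :=
  Finset.univ.filter (fun i => m ≤ i.val)

lemma chainSet_nonempty (n m : ℕ) (hm : m ≤ n) : (chainSet n m).Nonempty :=
  ⟨⟨n, by omega⟩, by simp [chainSet]; omega⟩

open Classical in
/-- Counter-valuation on `Med (n+1)` refuting `bd n` at the root. -/
noncomputable def ctrV (n : ℕ) : ℕ → Set (Med (n + 1)) :=
  fun k => if 1 ≤ k ∧ k ≤ n then {X | X.1 ⊆ chainSet n (n + 1 - k)} else ∅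

lemma ctrV_isVal (n : ℕ) : IsVal (ctrV n) := by
  intro p X Y hXY hX
  unfold ctrV at *
  split at hX
  · simp only [Set.mem_setOf_eq] at *
    split
    · exact Finset.Subset.trans hXY hX
    · exact absurd hX (by simp_all)
  · exact absurd hX (Set.notMem_empty _)

lemma ctr_not_forces (n : ℕ) :
    ∀ (k m : ℕ), m + k = n → ∀ X : Med (n + 1), chainSet n m ⊆ X.1 →
      ¬ forces (ctrV n) X (bd k) := by
  intro k
  induction k with
  | zero => intro m hm X hX h; exact h
  | succ k ih =>
    intro m hm X hX h
    rcases h with h | h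
    · -- X forces p_{k+1}
      have hX' : X ∈ ctrV n (k + 1) := h
      unfold ctrV at hX'
      rw [if_pos ⟨by omega, by omega⟩] at hX'
      simp only [Set.mem_setOf_eq] at hX'
      have hmem : (⟨m, by omega⟩ : Fin (n + 1)) ∈ chainSet n m := by
        simp [chainSet]
      have := hX' (hX hmem)
      simp only [chainSet, Finset.mem_filter] at this
      omega
    · -- X forces p_{k+1} → bd k
      have hm1 : m + 1 ≤ n := by omega
      set v : Med (n + 1) := ⟨chainSet n (m + 1), chainSet_nonempty n (m + 1) hm1⟩ with hv
      have hXv : X ≤ v := by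
        refine Finset.Subset.trans ?_ hX
        intro i (hi : i ∈ chainSet n (m + 1))
        simp only [chainSet, Finset.mem_filter, Finset.mem_univ, true_and] at *
        omega
      have hvp : forces (ctrV n) v (Form.var (k + 1)) := by
        show v ∈ ctrV n (k + 1)
        unfold ctrV
        rw [if_pos ⟨by omega, by omega⟩]
        simp only [Set.mem_setOf_eq]
        have : n + 1 - (k + 1) = m + 1 := by omega
        rw [this]
      have := h v hXv hvp
      exact ih (m + 1) (by omega) v (Finset.Subset.refl _) this

end Stmt12Aux

/-- The logic of the root of F_{n+1} is strictly contained in the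
logic of the root of F_n. -/
theorem stmt12 (n : ℕ) (hn : 1 ≤ n) :
    (∀ φ : Form, valid (root (n + 1) (by omega)) φ → valid (root n hn) φ) ∧
    (∃ φ : Form, valid (root n hn) φ ∧ ¬ valid (root (n + 1) (by omega)) φ) := by
  constructor
  · intro φ hφ V hV
    have hW : IsVal (fun p => {Y | fmap n hn Y ∈ V p}) := by
      intro p X Y hXY hX
      exact hV p _ _ (fmap_mono n hn hXY) hX
    have := hφ _ hW
    have := (forces_pullback n hn V φ _).mp this
    rwa [fmap_root n hn] at this
  · refine ⟨bd n, ?_, ?_⟩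
    · intro V hV
      apply forces_bd_of_card V n
      simp [root]
    · intro hval
      have h := hval (ctrV n) (ctrV_isVal n)
      refine ctr_not_forces n n 0 (by omega) (root (n + 1) (by omega)) ?_ h
      exact Finset.filter_subset _ _
end

section
/- Let n ≥ 1, let α_0,…,α_{n−1} be formulas and V_0 an intuitionistic valuation on the n-Medvedev frame F_n such that for all 0 ≤ i, j < n: (F_n,V_0), {j} ⊨ α_i if and only if i = j. For nonempty I ⊆ {0,…,n−1} let α_I = ¬¬(⋁_{i∈I} α_i), and for an upward-closed set S of points of F_n let α_S = ⋁_{I∈S} α_I (with α_∅ = ⊥). Let V be any intuitionistic valuation on F_n and define the substitution σ by σ(p) = α_{V(p)} for each propositional variable p, extended homomorphically to all formulas. Then for every formula β and every nonempty J ⊆ {0,…,n−1}: (F_n,V_0), J ⊨ σ(β) if and only if (F_n,V), J ⊨ β. -/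
lemma Med.le_iff {n : ℕ} (X Y : Med n) : X ≤ Y ↔ Y.1 ⊆ X.1 := Iff.rfl

lemma forces_foldr_or {P : Type} [PartialOrder P] {ι : Type} (V : ℕ → Set P) (w : P)
    (F : ι → Form) (l : List ι) :
    forces V w (l.foldr (fun i acc => (F i).or acc) .bot) ↔ ∃ i ∈ l, forces V w (F i) := by
  induction l with
  | nil => simp [forces]
  | cons a l ih => simp [forces, ih]

lemma forces_disjOver {P : Type} [PartialOrder P] {n : ℕ} (V : ℕ → Set P) (w : P)
    (I : Finset (Fin n)) (α : Fin n → Form) :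
    forces V w (disjOver I α) ↔ ∃ i ∈ I, forces V w (α i) := by
  rw [disjOver, forces_foldr_or]
  simp [List.mem_filter, List.mem_finRange]

lemma med_le_singleton {n : ℕ} (J : Med n) {j : Fin n} (hj : j ∈ J.1) :
    J ≤ (⟨{j}, Finset.singleton_nonempty j⟩ : Med n) := by
  refine (Med.le_iff _ _).mpr ?_; simpa using hj

lemma forces_alphaI {n : ℕ} (α : Fin n → Form) (V0 : ℕ → Set (Med n))
    (hα : ∀ i j : Fin n,
      forces V0 (⟨{j}, Finset.singleton_nonempty j⟩ : Med n) (α i) ↔ i = j)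
    (I J : Finset (Fin n)) (hJ : J.Nonempty) :
    forces V0 (⟨J, hJ⟩ : Med n) (alphaI I α) ↔ J ⊆ I := by
  constructor
  · intro h j hjJ
    have h1 := h _ (med_le_singleton ⟨J, hJ⟩ hjJ)
    by_contra hjI
    apply h1
    intro u hu hdisj
    rw [forces_disjOver] at hdisj
    obtain ⟨i, hiI, hfi⟩ := hdisj
    have hu' : u = (⟨{j}, Finset.singleton_nonempty j⟩ : Med n) := by
      apply le_antisymm _ hu
      refine (Med.le_iff _ _).mpr ?_
      rcases u with ⟨K, hK⟩
      replace hu := (Med.le_iff _ _).mp hu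
      simp only [Finset.subset_singleton_iff] at hu
      rcases hu with h0 | h0
      · exact absurd h0 hK.ne_empty
      · simp [h0]
    rw [hu'] at hfi
    replace hfi := (hα i j).mp hfi
    exact hjI (hfi ▸ hiI)
  · intro hJI v hv hneg
    obtain ⟨j, hjK⟩ := v.2
    apply hneg _ (med_le_singleton v hjK)
    refine (forces_disjOver _ _ _ _).mpr ?_
    refine ⟨j, hJI (hv hjK), ?_⟩
    exact (hα j j).mpr rfl

lemma forces_alphaS {n : ℕ} (α : Fin n → Form) (V0 : ℕ → Set (Med n))
    (hα : ∀ i j : Fin n,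
      forces V0 (⟨{j}, Finset.singleton_nonempty j⟩ : Med n) (α i) ↔ i = j)
    (S : Set (Med n)) (hS : ∀ x y : Med n, x ≤ y → x ∈ S → y ∈ S)
    (J : Finset (Fin n)) (hJ : J.Nonempty) :
    forces V0 (⟨J, hJ⟩ : Med n) (alphaS S α) ↔ (⟨J, hJ⟩ : Med n) ∈ S := by
  classical
  rw [alphaS]; refine (forces_foldr_or _ _ _ _).trans ?_
  constructor
  · rintro ⟨I, hI, hf⟩
    simp only [Finset.mem_toList, Finset.mem_filter] at hI
    replace hf := (forces_alphaI α V0 hα I.1 J hJ).mp hf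
    exact hS I _ hf hI.2
  · intro h
    refine ⟨⟨J, hJ⟩, ?_, ?_⟩
    · exact Finset.mem_toList.mpr (Finset.mem_filter.mpr ⟨Finset.mem_univ _, h⟩)
    · exact (forces_alphaI α V0 hα J J hJ).mpr (Finset.Subset.refl _)

/-- For the substitution `σ(p) = α_{V(p)}`, forcing of `σ(β)`
under `V_0` coincides with forcing of `β` under `V` at every point. -/
theorem stmt19 (n : ℕ) (hn : 1 ≤ n) (α : Fin n → Form)
    (V0 V : ℕ → Set (Med n)) (hV0 : IsVal V0) (hV : IsVal V)
    (hα : ∀ i j : Fin n,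
      forces V0 (⟨{j}, Finset.singleton_nonempty j⟩ : Med n) (α i) ↔ i = j) :
    ∀ (β : Form) (J : Finset (Fin n)) (hJ : J.Nonempty),
      forces V0 (⟨J, hJ⟩ : Med n) (β.subst (fun q => alphaS (V q) α)) ↔
        forces V (⟨J, hJ⟩ : Med n) β := by
  intro β
  induction β with
  | var q =>
    intro J hJ
    exact forces_alphaS α V0 hα (V q) (hV q) J hJ
  | bot => intro J hJ; simp [Form.subst, forces]
  | and φ ψ ihφ ihψ =>
    intro J hJ
    simp only [Form.subst, forces]
    rw [ihφ J hJ, ihψ J hJ]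
  | or φ ψ ihφ ihψ =>
    intro J hJ
    simp only [Form.subst, forces]
    rw [ihφ J hJ, ihψ J hJ]
  | imp φ ψ ihφ ihψ =>
    intro J hJ
    simp only [Form.subst, forces]
    constructor
    · rintro h ⟨K, hK⟩ hle hf
      rw [← ihψ K hK]
      exact h ⟨K, hK⟩ hle ((ihφ K hK).mpr hf)
    · rintro h ⟨K, hK⟩ hle hf
      rw [ihψ K hK]
      exact h ⟨K, hK⟩ hle ((ihφ K hK).mp hf)
end
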